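/- In ℤ[x_1,…,x_n], for any 1 ≤ k ≤ n and any a ≥ 0, the identity Σ_{ℓ=0}^{n−k} e_ℓ(x_{k+1},…,x_n) · c(n, n−k−ℓ+a) = c(k, a) holds, where c(k,a) := Σ_{ℓ=1}^{k} (−1)^{a+k+ℓ} h_{a+ℓ−k}(x_ℓ,…,x_k) viewed as the coefficient relation obtained from ω_k^a = Σ e_ℓ(x_{k+1},…,x_n) ω_n^{n−k−ℓ+a}; concretely, for each 1 ≤ j ≤ n: Σ_{ℓ=0}^{n−k} e_ℓ(x_{k+1},…,x_n) (−1)^{a−k−ℓ+j} h_{a−k−ℓ+j}(x_j,…,x_n) = (−1)^{a+k+j} h_{a+j−k}(x_j,…,x_k) when j ≤ k, and = 0 when j > k. -/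

import Mathlib

open MvPolynomial

/-- Complete homogeneous symmetric polynomial of degree `d` in the variables `x_i`, `i ∈ s`. -/
noncomputable def hpoly (s : Finset ℕ) (d : ℕ) : MvPolynomial ℕ ℤ :=
  ∑ m ∈ s.sym d, (m.1.map X).prod

/-- Elementary symmetric polynomial of degree `d` in the variables `x_i`, `i ∈ s`. -/
noncomputable def epoly (s : Finset ℕ) (d : ℕ) : MvPolynomial ℕ ℤ :=
  ∑ t ∈ s.powersetCard d, ∏ i ∈ t, X i

/-! With `E_s(t) = ∏_{i ∈ s} (1 - x_i t)` and `H_s(t) = ∏_{i ∈ s} (1 - x_i t)⁻¹`, the generating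
series of `(-1)^d e_d(s)` and of `h_d(s)`, the left-hand side is `(-1)^m` times the coefficient of
`t^m`, `m = a + j - k`, in `E_{[k+1,n]} H_{[j,n]}`. Since `E_s H_s = 1`, this product is
`H_{[j,k]}` when `j ≤ k` and `E_{[k+1,j-1]}` when `j > k`; the latter is a polynomial in `t` of
degree `j - 1 - k < m`. -/

open Finset
open scoped PowerSeries

lemma epoly_zero (s : Finset ℕ) : epoly s 0 = 1 := by
  simp [epoly]

lemma epoly_eq_zero_of_card_lt {s : Finset ℕ} {d : ℕ} (h : #s < d) : epoly s d = 0 := by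
  simp [epoly, powersetCard_eq_empty.2 h]

lemma epoly_insert_succ {y : ℕ} {s : Finset ℕ} (hy : y ∉ s) (d : ℕ) :
    epoly (insert y s) (d + 1) = epoly s (d + 1) + X y * epoly s d := by
  have not_mem {t : Finset ℕ} (ht : t ∈ s.powersetCard d) : y ∉ t :=
    fun h => hy ((mem_powersetCard.1 ht).1 h)
  rw [epoly, powersetCard_succ_insert hy, sum_union, sum_image, epoly, epoly, mul_sum]
  · exact congrArg _ (sum_congr rfl fun t ht => prod_insert (not_mem ht))
  · intro t ht u hu htu
    rw [← erase_insert (not_mem ht), ← erase_insert (not_mem hu), htu]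
  · refine disjoint_right.2 fun t ht ht' => ?_
    obtain ⟨u, -, rfl⟩ := mem_image.1 ht
    exact hy ((mem_powersetCard.1 ht').1 (mem_insert_self y u))

lemma hpoly_empty (d : ℕ) : hpoly ∅ d = if d = 0 then 1 else 0 := by
  cases d with
  | zero => simp [hpoly]; rfl
  | succ d => simp [hpoly]

lemma hpoly_insert {y : ℕ} {s : Finset ℕ} (hy : y ∉ s) (d : ℕ) :
    hpoly (insert y s) d = ∑ i ∈ range (d + 1), X y ^ i * hpoly s (d - i) := by
  -- a multiset on `insert y s` is `i` copies of `y` together with a multiset on `s`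
  rw [hpoly, ← sum_coe_sort, ← Fintype.sum_equiv (symInsertEquiv hy).symm
    (fun p => X y ^ (p.1 : ℕ) * (((p.2 : Sym ℕ (d - p.1)) : Multiset ℕ).map X).prod)]
  · rw [← univ_sigma_univ, sum_sigma, sum_range fun i => X y ^ i * hpoly s (d - i)]
    refine sum_congr rfl fun i _ => ?_
    rw [hpoly, mul_sum, ← sum_coe_sort (s.sym (d - i))]
    rfl
  · intro p
    rw [Sym.val_eq_coe, symInsertEquiv_symm_apply_coe, Sym.coe_fill, Multiset.map_add,
      Multiset.prod_add, Sym.coe_replicate, Multiset.map_replicate, Multiset.prod_replicate,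
      mul_comm]

lemma PowerSeries.one_sub_C_mul_X_mul_mk_pow {R : Type*} [CommRing R] (x : R) :
    (1 - C x * X) * mk (fun n => x ^ n) = 1 := by
  have := congrArg (rescale x) (mk_one_mul_one_sub_eq_one R)
  simpa [rescale_mk, rescale_X, mul_comm] using this

noncomputable def eSeries (s : Finset ℕ) : (MvPolynomial ℕ ℤ)⟦X⟧ :=
  ∏ i ∈ s, (1 - PowerSeries.C (X i) * PowerSeries.X)

noncomputable def hSeries (s : Finset ℕ) : (MvPolynomial ℕ ℤ)⟦X⟧ :=
  ∏ i ∈ s, PowerSeries.mk fun d => X i ^ d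

lemma eSeries_union {s t : Finset ℕ} (h : Disjoint s t) :
    eSeries (s ∪ t) = eSeries s * eSeries t :=
  prod_union h

lemma hSeries_union {s t : Finset ℕ} (h : Disjoint s t) :
    hSeries (s ∪ t) = hSeries s * hSeries t :=
  prod_union h

lemma eSeries_mul_hSeries (s : Finset ℕ) : eSeries s * hSeries s = 1 := by
  rw [eSeries, hSeries, ← prod_mul_distrib]
  exact prod_eq_one fun i _ => PowerSeries.one_sub_C_mul_X_mul_mk_pow _

lemma coeff_eSeries (s : Finset ℕ) (d : ℕ) :
    PowerSeries.coeff d (eSeries s) = (-1) ^ d * epoly s d := by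
  induction s using Finset.induction_on generalizing d with
  | empty =>
    rcases d with _ | d
    · simp [eSeries, epoly_zero]
    · simp [eSeries, epoly_eq_zero_of_card_lt (show #(∅ : Finset ℕ) < d + 1 by simp)]
  | insert y s hy ih =>
    rw [eSeries, prod_insert hy, ← eSeries, sub_mul, one_mul, mul_assoc, map_sub,
      PowerSeries.coeff_C_mul]
    cases d with
    | zero => simp [ih, epoly_zero]
    | succ d =>
      rw [PowerSeries.coeff_succ_X_mul, ih, ih, epoly_insert_succ hy]
      ring

lemma coeff_hSeries (s : Finset ℕ) (d : ℕ) :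
    PowerSeries.coeff d (hSeries s) = hpoly s d := by
  induction s using Finset.induction_on generalizing d with
  | empty => rw [hSeries, prod_empty, PowerSeries.coeff_one, hpoly_empty]
  | insert y s hy ih =>
    rw [hSeries, prod_insert hy, ← hSeries, PowerSeries.coeff_mul,
      Nat.sum_antidiagonal_eq_sum_range_succ_mk, hpoly_insert hy]
    simp only [PowerSeries.coeff_mk, ih]

lemma coeff_eSeries_mul_hSeries (s t : Finset ℕ) (m : ℕ) :
    PowerSeries.coeff m (eSeries s * hSeries t) =
      ∑ l ∈ range (m + 1), (-1) ^ l * epoly s l * hpoly t (m - l) := by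
  rw [PowerSeries.coeff_mul, Nat.sum_antidiagonal_eq_sum_range_succ_mk]
  simp only [coeff_eSeries, coeff_hSeries]

lemma sum_epoly_mul_hpoly_union {s t : Finset ℕ} (h : Disjoint s t) (m : ℕ) :
    ∑ l ∈ range (m + 1), (-1) ^ l * epoly t l * hpoly (s ∪ t) (m - l) = hpoly s m := by
  rw [← coeff_eSeries_mul_hSeries, hSeries_union h, mul_left_comm, eSeries_mul_hSeries, mul_one,
    coeff_hSeries]

lemma sum_epoly_union_mul_hpoly {s t : Finset ℕ} (h : Disjoint s t) (m : ℕ) :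
    ∑ l ∈ range (m + 1), (-1) ^ l * epoly (s ∪ t) l * hpoly t (m - l) = (-1) ^ m * epoly s m := by
  rw [← coeff_eSeries_mul_hSeries, eSeries_union h, mul_assoc, eSeries_mul_hSeries, mul_one,
    coeff_eSeries]

lemma sum_epoly_Icc_mul_hpoly_Icc {n k j m : ℕ} (hkn : k ≤ n) (hjn : j ≤ n) (hjm : j ≤ k + m) :
    ∑ l ∈ range (m + 1), (-1) ^ l * epoly (Icc (k + 1) n) l * hpoly (Icc j n) (m - l) =
      if j ≤ k then hpoly (Icc j k) m else 0 := by
  split_ifs with hjk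
  · have hsplit : Icc j n = Icc j k ∪ Icc (k + 1) n := by ext; simp; omega
    have hdisj : Disjoint (Icc j k) (Icc (k + 1) n) :=
      disjoint_left.2 fun x hx hx' => by simp at hx hx'; omega
    rw [hsplit, sum_epoly_mul_hpoly_union hdisj]
  · have hsplit : Icc (k + 1) n = Icc (k + 1) (j - 1) ∪ Icc j n := by ext; simp; omega
    have hdisj : Disjoint (Icc (k + 1) (j - 1)) (Icc j n) :=
      disjoint_left.2 fun x hx hx' => by simp at hx hx'; omega
    rw [hsplit, sum_epoly_union_mul_hpoly hdisj, epoly_eq_zero_of_card_lt (by simp; omega),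
      mul_zero]

lemma sum_range_ite_le_of_eq_zero {M : Type*} [AddCommMonoid M] {g : ℕ → M} {N : ℕ}
    (hg : ∀ l, N < l → g l = 0) (m : ℕ) :
    ∑ l ∈ range (N + 1), (if l ≤ m then g l else 0) = ∑ l ∈ range (m + 1), g l := by
  rw [← sum_filter]
  refine sum_subset (fun l hl => ?_) fun l hl hl' => hg l ?_
  · simp only [mem_filter, mem_range] at hl ⊢
    omega
  · simp only [mem_filter, mem_range] at hl hl'
    omega

theorem schur_coefficient_identity_general (n k a j : ℕ)
    (hkn : k ≤ n) (hjn : j ≤ n) :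
    (∑ l ∈ Finset.range (n - k + 1),
      if k + l ≤ a + j then
        epoly (Finset.Icc (k + 1) n) l * (-1 : MvPolynomial ℕ ℤ) ^ (a + j + k + l) *
          hpoly (Finset.Icc j n) (a + j - k - l)
      else 0)
    = if j ≤ k ∧ k ≤ a + j then
        (-1 : MvPolynomial ℕ ℤ) ^ (a + k + j) * hpoly (Finset.Icc j k) (a + j - k)
      else 0 := by
  by_cases hka : k ≤ a + j
  swap
  · rw [if_neg fun h => hka h.2]
    exact sum_eq_zero fun l _ => if_neg (by omega)
  obtain ⟨m, hm⟩ : ∃ m, a + j = k + m := ⟨a + j - k, by omega⟩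
  have hterm (l : ℕ) :
      (if k + l ≤ k + m then
        epoly (Icc (k + 1) n) l * (-1 : MvPolynomial ℕ ℤ) ^ (k + m + k + l) *
          hpoly (Icc j n) (k + m - k - l) else 0) =
      if l ≤ m then (-1) ^ m * ((-1) ^ l * epoly (Icc (k + 1) n) l * hpoly (Icc j n) (m - l))
      else 0 := by
    rw [neg_one_pow_congr (m := k + m + k + l) (n := m + l) (by simp only [Nat.even_iff]; omega),
      show k + m - k - l = m - l by omega, pow_add]
    split_ifs <;> first | omega | ring
  have hsign : (-1 : MvPolynomial ℕ ℤ) ^ (a + k + j) = (-1) ^ m :=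
    neg_one_pow_congr (by simp only [Nat.even_iff]; omega)
  rw [hsign, hm, sum_congr rfl fun l _ => hterm l, sum_range_ite_le_of_eq_zero _ m, ← mul_sum,
    sum_epoly_Icc_mul_hpoly_Icc hkn hjn (by omega), Nat.add_sub_cancel_left]
  · simp
  · intro l hl
    rw [epoly_eq_zero_of_card_lt (by simp; omega)]
    ring

/-- Coefficientwise form of `ω_k^a = Σ_{ℓ=0}^{n−k} e_ℓ(x_{k+1},…,x_n) ω_n^{n−k−ℓ+a}`:
for each `1 ≤ j ≤ n`,
`Σ_{ℓ=0}^{n−k} e_ℓ(x_{k+1},…,x_n)·(−1)^{a−k−ℓ+j}·h_{a−k−ℓ+j}(x_j,…,x_n)`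
equals `(−1)^{a+k+j}·h_{a+j−k}(x_j,…,x_k)` if `j ≤ k` and `0` if `j > k`
(terms with negative `h`-degree are zero; signs are written with the same parity). -/
theorem schur_coefficient_identity (n k a j : ℕ)
    (hk : 1 ≤ k) (hkn : k ≤ n) (hj : 1 ≤ j) (hjn : j ≤ n) :
    (∑ l ∈ Finset.range (n - k + 1),
      if k + l ≤ a + j then
        epoly (Finset.Icc (k + 1) n) l * (-1 : MvPolynomial ℕ ℤ) ^ (a + j + k + l) *
          hpoly (Finset.Icc j n) (a + j - k - l)
      else 0)
    = if j ≤ k ∧ k ≤ a + j then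
        (-1 : MvPolynomial ℕ ℤ) ^ (a + k + j) * hpoly (Finset.Icc j k) (a + j - k)
      else 0 :=
  schur_coefficient_identity_general n k a j hkn hjn
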